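/- arXiv:2208.10306 — 2 statements merged into one kernel-verified Lean document; each statement's English description precedes it below -/
import Mathlib

section
/- Let F be a field, n a positive integer, and x : ℤ/nℤ → F with x_i ≠ 0 for all i and D_i(x) ≠ 0 for all i. Then ∏_{i ∈ ℤ/nℤ} (N_i(x)/D_i(x)) = (∏_{i ∈ ℤ/nℤ} x_i)⁻¹. -/
/-- `N_i(x) = ∑_{t=0}^{n−1} ∏_{s=0}^{t−1} x_{i+s}`, indices in `ℤ/nℤ`
(the `t = 0` summand being the empty product `1`). -/
def Nfun {R : Type*} [CommRing R] (n : ℕ) (x : ZMod n → R) (i : ZMod n) : R :=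
  ∑ t ∈ Finset.range n, ∏ s ∈ Finset.range t, x (i + (s : ZMod n))

/-- `D_i(x) = ∑_{t=1}^{n} ∏_{s=1}^{t} x_{i+s}`, indices in `ℤ/nℤ`. -/
def Dfun {R : Type*} [CommRing R] (n : ℕ) (x : ZMod n → R) (i : ZMod n) : R :=
  ∑ t ∈ Finset.Icc 1 n, ∏ s ∈ Finset.Icc 1 t, x (i + (s : ZMod n))

lemma D_eq_x_mul_N {R : Type*} [CommRing R] (n : ℕ) (x : ZMod n → R) (i : ZMod n) :
    Dfun n x i = x (i + 1) * Nfun n x (i + 2) := by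
  unfold Dfun Nfun
  rw [Finset.mul_sum]
  rw [show Finset.Icc 1 n = Finset.map ⟨fun t => t + 1, add_left_injective 1⟩ (Finset.range n) by
    ext t
    simp only [Finset.mem_map, Finset.mem_range, Finset.mem_Icc, Function.Embedding.coeFn_mk]
    constructor
    · rintro ⟨h1, h2⟩; exact ⟨t - 1, by omega, by omega⟩
    · rintro ⟨a, ha, rfl⟩; omega]
  rw [Finset.sum_map]
  refine Finset.sum_congr rfl fun t ht => ?_
  simp only [Function.Embedding.coeFn_mk]
  rw [show Finset.Icc 1 (t + 1) = Finset.map ⟨fun s => s + 1, add_left_injective 1⟩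
      (Finset.range (t + 1)) by
    ext s
    simp only [Finset.mem_map, Finset.mem_range, Finset.mem_Icc, Function.Embedding.coeFn_mk]
    constructor
    · rintro ⟨h1, h2⟩; exact ⟨s - 1, by omega, by omega⟩
    · rintro ⟨a, ha, rfl⟩; omega]
  rw [Finset.prod_map]
  rw [Finset.prod_range_succ']
  simp only [Function.Embedding.coeFn_mk]
  rw [mul_comm]
  congr 1
  · push_cast; ring_nf
  · refine Finset.prod_congr rfl fun s _ => ?_
    congr 1
    push_cast; ring

/-- For a field `F`, `n ≥ 1`, and `x : ℤ/nℤ → F` with all `x_i ≠ 0` and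
all `D_i(x) ≠ 0`, one has `∏_i N_i(x)/D_i(x) = (∏_i x_i)⁻¹`. -/
theorem prod_N_div_D {F : Type*} [Field F] (n : ℕ) [NeZero n] (x : ZMod n → F)
    (hx : ∀ i, x i ≠ 0) (hD : ∀ i, Dfun n x i ≠ 0) :
    ∏ i : ZMod n, (Nfun n x i / Dfun n x i) = (∏ i : ZMod n, x i)⁻¹ := by
  have hN : ∀ i, Nfun n x i ≠ 0 := by
    intro i
    have h := hD (i - 2)
    rw [D_eq_x_mul_N] at h
    simp only [sub_add_cancel] at h
    exact fun h0 => h (by rw [h0, mul_zero])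
  rw [Finset.prod_div_distrib]
  have hDprod : ∏ i : ZMod n, Dfun n x i
      = (∏ i : ZMod n, x i) * ∏ i : ZMod n, Nfun n x i := by
    simp only [D_eq_x_mul_N]
    rw [Finset.prod_mul_distrib]
    congr 1
    · exact Fintype.prod_equiv (Equiv.addRight (1 : ZMod n)) _ _ fun i => rfl
    · exact Fintype.prod_equiv (Equiv.addRight (2 : ZMod n)) _ _ fun i => rfl
  rw [hDprod]
  have hNprod : (∏ i : ZMod n, Nfun n x i) ≠ 0 := Finset.prod_ne_zero_iff.2 fun i _ => hN i
  have hxprod : (∏ i : ZMod n, x i) ≠ 0 := Finset.prod_ne_zero_iff.2 fun i _ => hx i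
  field_simp
end

section
/- Let F be a field, n a positive integer, and x : ℤ/nℤ → F with x_i ≠ 0, N_i(x) ≠ 0, and D_i(x) ≠ 0 for all i ∈ ℤ/nℤ. Define y : ℤ/nℤ → F by y_i = N_i(x)/D_i(x), and suppose D_i(y) ≠ 0 for all i ∈ ℤ/nℤ. Then N_i(y)/D_i(y) = x_i for all i ∈ ℤ/nℤ; that is, the geometric R-matrix transformation formula is an involution. -/
open Finset

section Aux
variable {F : Type*} [CommRing F] {n : ℕ}

/-- Peeling the first factor of a cyclic product. -/
lemma prod_peel (x : ZMod n → F) (i : ZMod n) (t : ℕ) :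
    ∏ s ∈ range (t+1), x (i + (s : ZMod n))
      = x i * ∏ s ∈ range t, x ((i+1) + (s : ZMod n)) := by
  rw [Finset.prod_range_succ']
  simp only [Nat.cast_zero, add_zero]
  rw [mul_comm]
  congr 1
  apply Finset.prod_congr rfl
  intro s _
  push_cast
  ring_nf

lemma prod_univ_eq_range [NeZero n] (x : ZMod n → F) :
    ∏ s ∈ range n, x ((s : ZMod n)) = ∏ j, x j := by
  refine Finset.prod_nbij' (fun s => (s : ZMod n)) (fun j => j.val) ?_ ?_ ?_ ?_ ?_
  · intro a _; exact Finset.mem_univ _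
  · intro a _; exact Finset.mem_range.mpr (ZMod.val_lt a)
  · intro a ha; exact ZMod.val_natCast_of_lt (Finset.mem_range.mp ha)
  · intro a _; simp [ZMod.natCast_val, ZMod.cast_id]
  · intro a _; rfl

lemma Nfun_rec [NeZero n] (x : ZMod n → F) (i : ZMod n) :
    Nfun n x i = x i * Nfun n x (i+1) + (1 - ∏ j, x j) := by
  obtain ⟨m, rfl⟩ : ∃ m, n = m + 1 := ⟨n - 1, (Nat.succ_pred_eq_of_pos (Nat.pos_of_ne_zero (NeZero.ne _))).symm⟩
  have hP : ∏ j, x j = x i * ∏ s ∈ range m, x ((i+1) + (s : ZMod (m+1))) := by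
    rw [← prod_peel x i m, prod_univ_eq_range (fun j => x (i + j))]
    exact (Fintype.prod_equiv (Equiv.addLeft i) _ _ (fun j => rfl)).symm
  rw [Nfun, Finset.sum_range_succ', hP]
  simp only [Finset.prod_range_zero]
  have : ∀ t ∈ range m, (∏ s ∈ range (t+1), x (i + (s : ZMod (m+1))))
      = x i * ∏ s ∈ range t, x ((i+1) + (s : ZMod (m+1))) := fun t _ => prod_peel x i t
  rw [Finset.sum_congr rfl this, ← Finset.mul_sum]
  have hN1 : Nfun (m+1) x (i+1) = (∑ t ∈ range m, ∏ s ∈ range t, x ((i+1) + (s : ZMod (m+1))))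
      + ∏ s ∈ range m, x ((i+1) + (s : ZMod (m+1))) := by
    rw [Nfun, Finset.sum_range_succ]
  rw [hN1]
  ring

lemma Dfun_eq [NeZero n] (x : ZMod n → F) (i : ZMod n) :
    Dfun n x i = Nfun n x (i+1) - (1 - ∏ j, x j) := by
  have hIcc : ∀ t : ℕ, (∏ s ∈ Finset.Icc 1 t, x (i + (s : ZMod n)))
      = ∏ s ∈ range t, x ((i+1) + (s : ZMod n)) := by
    intro t
    rw [← Finset.Ico_add_one_right_eq_Icc, Finset.prod_Ico_eq_prod_range]
    rw [Nat.add_sub_cancel]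
    apply Finset.prod_congr rfl
    intro s _
    push_cast
    ring_nf
  have hP : ∏ j, x j = ∏ s ∈ range n, x ((i+1) + (s : ZMod n)) := by
    rw [prod_univ_eq_range (fun j => x ((i+1) + j))]
    exact (Fintype.prod_equiv (Equiv.addLeft (i+1)) _ _ (fun j => rfl)).symm
  rw [Dfun, Finset.sum_congr rfl (fun t _ => hIcc t), ← Finset.Ico_add_one_right_eq_Icc,
    Finset.sum_Ico_eq_sum_range]
  rw [Nat.add_sub_cancel]
  have : ∑ t ∈ range n, ∏ s ∈ range (1+t), x ((i+1) + (s : ZMod n))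
      = ∑ t ∈ range (n+1), (∏ s ∈ range t, x ((i+1) + (s : ZMod n))) - 1 := by
    rw [Finset.sum_range_succ' (fun t => ∏ s ∈ range t, x ((i+1) + (s : ZMod n))) n]
    simp [add_comm 1]
  rw [this, Finset.sum_range_succ, Nfun, hP]
  ring

end Aux

section Uniq
variable {F : Type*} [Field F] {n : ℕ}

lemma Nfun_unique [NeZero n] (y M : ZMod n → F) (hP : ∏ j, y j ≠ 1)
    (hM : ∀ i, M i = y i * M (i+1) + (1 - ∏ j, y j)) :
    ∀ i, M i = Nfun n y i := by
  set δ : ZMod n → F := fun i => M i - Nfun n y i with hδ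
  have hrec : ∀ i, δ i = y i * δ (i+1) := by
    intro i
    simp only [hδ]
    rw [hM i, Nfun_rec y i]
    ring
  have key : ∀ t : ℕ, ∀ i, δ i = (∏ s ∈ range t, y (i + (s : ZMod n))) * δ (i + (t : ZMod n)) := by
    intro t
    induction t with
    | zero => intro i; simp
    | succ t ih =>
      intro i
      rw [hrec i, ih (i+1), prod_peel y i t]
      have : i + 1 + (t : ZMod n) = i + ((t+1 : ℕ) : ZMod n) := by push_cast; ring
      rw [this, mul_assoc]
  intro i
  have h := key n i
  rw [prod_univ_eq_range (fun j => y (i + j)), ZMod.natCast_self, add_zero] at h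
  have h2 : (1 - ∏ j, y (i + j)) * δ i = 0 := by
    rw [sub_mul, one_mul]
    nth_rewrite 1 [h]
    ring
  have hPy : ∏ j, y (i + j) = ∏ j, y j :=
    Fintype.prod_equiv (Equiv.addLeft i) _ _ (fun j => rfl)
  rw [hPy] at h2
  have := mul_eq_zero.mp h2
  rcases this with h3 | h3
  · exact absurd (by linear_combination -h3) hP
  · exact sub_eq_zero.mp h3

end Uniq

/-- The geometric `R`-matrix transformation formula
`x ↦ (N_i(x)/D_i(x))_i` is an involution: if `y_i = N_i(x)/D_i(x)` then
`N_i(y)/D_i(y) = x_i` for all `i`, under the stated nonvanishing assumptions. -/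
theorem R_matrix_involution {F : Type*} [Field F] (n : ℕ) (hn : 0 < n)
    (x : ZMod n → F)
    (hx : ∀ i, x i ≠ 0) (hN : ∀ i, Nfun n x i ≠ 0) (hD : ∀ i, Dfun n x i ≠ 0)
    (y : ZMod n → F) (hy : ∀ i, y i = Nfun n x i / Dfun n x i)
    (hDy : ∀ i, Dfun n y i ≠ 0) :
    ∀ i, Nfun n y i / Dfun n y i = x i := by
  haveI : NeZero n := ⟨hn.ne'⟩
  set P : F := ∏ j, x j with hPdef
  have hP0 : P ≠ 0 := Finset.prod_ne_zero_iff.mpr fun j _ => hx j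
  have hxN : ∀ i, x i * Nfun n x (i+1) = Nfun n x i - (1-P) := fun i => by
    rw [Nfun_rec x i]; ring
  have hDN : ∀ i, Dfun n x i = Nfun n x (i+1) - (1-P) := fun i => Dfun_eq x i
  by_cases hP1 : P = 1
  · -- then y = x
    have hyx : ∀ i, y i = x i := by
      intro i
      have h := hxN i
      rw [hP1, sub_self, sub_zero] at h
      rw [hy i, hDN i, hP1, sub_self, sub_zero, ← h, mul_div_assoc,
        div_self (hN (i+1)), mul_one]
    intro i
    rw [show y = x from funext hyx, ← hy i]
    exact hyx i
  · -- P ≠ 1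
    have hc : (1:F) - P ≠ 0 := sub_ne_zero.mpr (Ne.symm hP1)
    have hPy : ∏ j, y j = P⁻¹ := by
      have h1 : ∏ j, Dfun n x j = P * ∏ j, Nfun n x j := by
        have : ∀ j, Dfun n x j = x (j+1) * Nfun n x (j+1+1) := fun j => by
          rw [hDN j, ← hxN (j+1)]
        rw [Finset.prod_congr rfl (fun j _ => this j), Finset.prod_mul_distrib]
        congr 1
        · exact Fintype.prod_equiv (Equiv.addRight (1 : ZMod n)) _ _ (fun j => rfl)
        · exact Fintype.prod_equiv (Equiv.addRight (2 : ZMod n)) _ _ (fun j => by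
            simp [add_assoc, one_add_one_eq_two])
      have h2 : ∏ j, y j = (∏ j, Nfun n x j) / ∏ j, Dfun n x j := by
        rw [← Finset.prod_div_distrib]
        exact Finset.prod_congr rfl fun j _ => hy j
      have hNprod : ∏ j, Nfun n x j ≠ 0 := Finset.prod_ne_zero_iff.mpr fun j _ => hN j
      rw [h2, h1]
      field_simp
    have hPy1 : ∏ j, y j ≠ 1 := by
      rw [hPy]; intro h; exact hP1 (by rw [← inv_inv P, h, inv_one])
    set M : ZMod n → F := fun i => (Nfun n x i - (1-P)) / P with hM
    have hMrec : ∀ i, M i = y i * M (i+1) + (1 - ∏ j, y j) := by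
      intro i
      rw [hPy, hy i, hDN i]
      simp only [hM]
      have hd : Nfun n x (i+1) - (1-P) ≠ 0 := by rw [← hDN i]; exact hD i
      field_simp
      ring
    have hMN : ∀ i, M i = Nfun n y i := Nfun_unique y M hPy1 hMrec
    intro i
    rw [← hMN i, Dfun_eq y i, ← hMN (i+1), hPy]
    simp only [hM]
    have hNum : (Nfun n x (i+1) - (1-P)) / P - (1 - P⁻¹) = Nfun n x (i+1) / P := by
      field_simp
      ring
    rw [hNum, ← hxN i]
    rw [div_div_div_eq, mul_comm P, mul_div_mul_right _ _ hP0, mul_div_assoc,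
      div_self (hN (i+1)), mul_one]
end
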